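/- Let P be a probability measure on the unit sphere of ℝᵈ and λ ∈ [0,1]. Any minimizer (w_λ, ρ_λ) of F(w,ρ) := (1/2)(‖w‖² + ρ²) - λρ + E_{X∼P}[(ρ - ⟨w,X⟩)₊] satisfies ρ_λ ≤ ‖w_λ‖. -/

import Mathlib

/-! If `ρ > ‖w‖`, then `ρ - ⟪w, X⟫ ≥ 0` almost surely because `‖X‖ ≤ 1`, so the hinge term is
affine in `ρ` on `[‖w‖, ∞)` and `F w ρ - F w ‖w‖ = (ρ - ‖w‖) ((ρ + ‖w‖) / 2 + 1 - λ) > 0`: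
lowering `ρ` to `‖w‖` strictly decreases the objective. -/

open MeasureTheory RealInnerProductSpace

section Hinge

variable {E : Type*} [NormedAddCommGroup E] [InnerProductSpace ℝ E] [MeasurableSpace E]
  [OpensMeasurableSpace E] {μ : Measure E}

lemma integrable_inner_of_ae_norm_le_one [IsFiniteMeasure μ] (hμ : ∀ᵐ x ∂μ, ‖x‖ ≤ 1) (w : E) :
    Integrable (fun x => ⟪w, x⟫) μ := by
  refine (integrable_const ‖w‖).mono' (continuous_const.inner continuous_id).aestronglyMeasurable ?_
  filter_upwards [hμ] with x hx
  calc ‖⟪w, x⟫‖ ≤ ‖w‖ * ‖x‖ := abs_real_inner_le_norm w x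
    _ ≤ ‖w‖ := mul_le_of_le_one_right (norm_nonneg w) hx

lemma integral_max_sub_inner_of_norm_le [IsProbabilityMeasure μ] (hμ : ∀ᵐ x ∂μ, ‖x‖ ≤ 1)
    (w : E) {ρ : ℝ} (hρ : ‖w‖ ≤ ρ) :
    ∫ x, max (ρ - ⟪w, x⟫) 0 ∂μ = ρ - ∫ x, ⟪w, x⟫ ∂μ := by
  have hpos : ∀ᵐ x ∂μ, max (ρ - ⟪w, x⟫) 0 = ρ - ⟪w, x⟫ := by
    filter_upwards [hμ] with x hx
    refine max_eq_left (sub_nonneg.2 ?_)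
    calc ⟪w, x⟫ ≤ ‖w‖ * ‖x‖ := real_inner_le_norm w x
      _ ≤ ‖w‖ := mul_le_of_le_one_right (norm_nonneg w) hx
      _ ≤ ρ := hρ
  rw [integral_congr_ae hpos,
    integral_sub (integrable_const ρ) (integrable_inner_of_ae_norm_le_one hμ w),
    integral_const, probReal_univ, one_smul]

end Hinge

theorem stmt_14 (d : ℕ) (P : Measure (EuclideanSpace ℝ (Fin d))) [IsProbabilityMeasure P]
    (hsupp : ∀ᵐ x ∂P, ‖x‖ = 1) (lam : ℝ) (hlam : lam ∈ Set.Icc (0 : ℝ) 1)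
    (wl : EuclideanSpace ℝ (Fin d)) (ρl : ℝ)
    (F : EuclideanSpace ℝ (Fin d) → ℝ → ℝ)
    (hF : ∀ w ρ, F w ρ = (1 : ℝ) / 2 * (‖w‖ ^ 2 + ρ ^ 2) - lam * ρ
            + ∫ x, max (ρ - ⟪w, x⟫) 0 ∂P)
    (hmin : ∀ w ρ, F wl ρl ≤ F w ρ) :
    ρl ≤ ‖wl‖ := by
  by_contra! hρl
  have hP : ∀ᵐ x ∂P, ‖x‖ ≤ 1 := hsupp.mono fun x hx => hx.le
  have hdiff : F wl ρl - F wl ‖wl‖ = (ρl - ‖wl‖) * ((ρl + ‖wl‖) / 2 + 1 - lam) := by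
    rw [hF, hF, integral_max_sub_inner_of_norm_le hP wl hρl.le,
      integral_max_sub_inner_of_norm_le hP wl le_rfl]
    ring
  have hgain : 0 < (ρl - ‖wl‖) * ((ρl + ‖wl‖) / 2 + 1 - lam) :=
    mul_pos (sub_pos.2 hρl) (by linarith [norm_nonneg wl, hlam.2])
  linarith [hmin wl ‖wl‖]
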